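/- Let λ_0, λ_1 > 0 and α ∈ (0,1). The function D(p,q) = ((2-q)H(p) + pH(q))/(2pλ_1 + (2-p-q)λ_0) attains its maximum over the curve γ_α = {(p,q) ∈ [0,1]² : α = 2pq/(2+p-q)} at the unique pair (p,q) ∈ γ_α ∩ (0,1)² satisfying α(λ_1-λ_0)·log(p(1-q)/((1-p)q)) + λ_0·log(p²(1-q)/(1-p)) - 2λ_1·log(1-p) = 0. -/

import Mathlib

/-!
Solving `α = 2pq/(2+p-q)` for `q` parametrizes `γ_α` as the graph of
`q(p) = α(2+p)/(2p+α)` over `α/(2-α) ≤ p ≤ 1`. Along this graph the derivative of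
`p ↦ D(p, q(p))` is a negative multiple of `ψ(p)`, the left-hand side of the stationarity
equation. Since `ψ` is strictly increasing on `(α/(2-α), 1)` and runs from `-∞` to `+∞`, it has
exactly one zero there, and `D` strictly increases up to it and strictly decreases after it.
-/

open Filter Set MeasureTheory
open scoped ENNReal

/-- The entropy function `H(p) = -p log p - (1-p) log(1-p)` (with `H(0) = H(1) = 0`,
which holds automatically since `Real.log 0 = 0`). -/
noncomputable def Hent (p : ℝ) : ℝ := -p * Real.log p - (1 - p) * Real.log (1 - p)

/-- The function `D(p,q) = ((2-q)H(p) + pH(q))/(2pλ₁ + (2-p-q)λ₀)`. -/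
noncomputable def Dfun (lam0 lam1 p q : ℝ) : ℝ :=
  ((2 - q) * Hent p + p * Hent q) / (2 * p * lam1 + (2 - p - q) * lam0)

/-- The curve `γ_α = {(p,q) ∈ [0,1]² : α = 2pq/(2+p-q)}`. -/
def gammaCurve (α : ℝ) : Set (ℝ × ℝ) :=
  {pq | pq.1 ∈ Set.Icc (0 : ℝ) 1 ∧ pq.2 ∈ Set.Icc (0 : ℝ) 1 ∧
    α = 2 * pq.1 * pq.2 / (2 + pq.1 - pq.2)}

open Real Topology

lemma Hent_eq_binEntropy : Hent = binEntropy := by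
  funext p
  simp only [Hent, binEntropy, log_inv]
  ring

noncomputable def curveQ (α p : ℝ) : ℝ := α * (2 + p) / (2 * p + α)

/-- The left-hand side of the stationarity equation at `(p, curveQ α p)`, logarithms expanded. -/
noncomputable def psi (lam0 lam1 α p : ℝ) : ℝ :=
  (α * (lam1 - lam0) + 2 * lam0) * log p
    - (α * (lam1 - lam0) + lam0 + 2 * lam1) * log (1 - p)
    - α * (lam1 - lam0) * log (curveQ α p)
    + (α * (lam1 - lam0) + lam0) * log (1 - curveQ α p)

section

variable {lam0 lam1 α p : ℝ}

lemma div_two_sub_pos (hα : α ∈ Ioo 0 1) : 0 < α / (2 - α) :=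
  div_pos hα.1 (by linarith [hα.2])

lemma div_two_sub_lt_one (hα : α ∈ Ioo 0 1) : α / (2 - α) < 1 :=
  (div_lt_one (by linarith [hα.2])).2 (by linarith [hα.2])

lemma curveQ_pos (hα : 0 < α) (hp : 0 ≤ p) : 0 < curveQ α p := by
  unfold curveQ
  positivity

lemma curveQ_le_one_iff (hα : α ∈ Ioo 0 1) (hp : 0 ≤ p) :
    curveQ α p ≤ 1 ↔ α / (2 - α) ≤ p := by
  have : 0 < 2 * p + α := by linarith [hα.1]
  rw [curveQ, div_le_one this, div_le_iff₀ (by linarith [hα.2])]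
  constructor <;> intro <;> linarith

lemma curveQ_lt_one_iff (hα : α ∈ Ioo 0 1) (hp : 0 ≤ p) :
    curveQ α p < 1 ↔ α / (2 - α) < p := by
  have : 0 < 2 * p + α := by linarith [hα.1]
  rw [curveQ, div_lt_one this, div_lt_iff₀ (by linarith [hα.2])]
  constructor <;> intro <;> linarith

lemma curveQ_div_two_sub_eq_one (hα : α ∈ Ioo 0 1) : curveQ α (α / (2 - α)) = 1 := by
  have h2 : 0 < 2 - α := by linarith [hα.2]
  rw [curveQ, div_eq_one_iff_eq (by have := hα.1; positivity)]
  field_simp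
  ring

lemma lt_curveQ (hα : α ∈ Ioo 0 1) (hp0 : 0 ≤ p) (hp1 : p ≤ 1) : α < curveQ α p := by
  have : 0 < 2 * p + α := by linarith [hα.1]
  rw [curveQ, lt_div_iff₀ this]
  nlinarith [hα.1, hα.2]

lemma Dfun_denom_pos (h0 : 0 < lam0) (h1 : 0 < lam1) (hp0 : 0 < p) (hp1 : p ≤ 1) {q : ℝ}
    (hq : q ≤ 1) : 0 < 2 * p * lam1 + (2 - p - q) * lam0 := by
  have : 0 ≤ 2 - p - q := by linarith
  positivity

lemma mem_gammaCurve_iff (hα : α ∈ Ioo 0 1) {q : ℝ} :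
    (p, q) ∈ gammaCurve α ↔ p ∈ Icc (α / (2 - α)) 1 ∧ q = curveQ α p := by
  have ha : 0 < α / (2 - α) := div_two_sub_pos hα
  constructor
  · rintro ⟨⟨hp0, hp1⟩, ⟨hq0, hq1⟩, hαpq⟩
    have hq : q = curveQ α p := by
      rw [eq_div_iff (by linarith)] at hαpq
      rw [curveQ, eq_div_iff (by linarith [hα.1])]
      linarith
    exact ⟨⟨(curveQ_le_one_iff hα hp0).1 (hq ▸ hq1), hp1⟩, hq⟩
  · rintro ⟨⟨hap, hp1⟩, rfl⟩
    have hp0 : 0 ≤ p := ha.le.trans hap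
    refine ⟨⟨hp0, hp1⟩, ⟨(curveQ_pos hα.1 hp0).le, (curveQ_le_one_iff hα hp0).2 hap⟩, ?_⟩
    have : 2 * p + α ≠ 0 := by linarith [hα.1]
    have : 2 + p - curveQ α p ≠ 0 := by linarith [(curveQ_le_one_iff hα hp0).2 hap]
    rw [eq_div_iff this, curveQ]
    field_simp
    ring

lemma hasDerivAt_curveQ (hs : 2 * p + α ≠ 0) :
    HasDerivAt (curveQ α) (α * (α - 4) / (2 * p + α) ^ 2) p := by
  have h := (((hasDerivAt_id' p).const_add 2).const_mul α).div
    (((hasDerivAt_id' p).const_mul 2).add_const α) hs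
  exact h.congr_deriv (by field_simp; ring)

lemma hasDerivAt_Dfun_curveQ (h0 : 0 < lam0) (h1 : 0 < lam1) (hα : α ∈ Ioo 0 1)
    (hp : p ∈ Ioo (α / (2 - α)) 1) :
    HasDerivAt (fun x ↦ Dfun lam0 lam1 x (curveQ α x))
      (-(2 * p ^ 2 * (4 - α)) /
          ((2 * p + α) ^ 2 * (2 * p * lam1 + (2 - p - curveQ α p) * lam0) ^ 2)
        * psi lam0 lam1 α p) p := by
  have hp0 : 0 < p := (div_two_sub_pos hα).trans hp.1
  have hs : 2 * p + α ≠ 0 := by linarith [hα.1]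
  have hq0 := curveQ_pos hα.1 hp0.le
  have hq1 := (curveQ_lt_one_iff hα hp0.le).2 hp.1
  have hM := (Dfun_denom_pos h0 h1 hp0 hp.2.le hq1.le).ne'
  have hH : ∀ x : ℝ, x ≠ 0 → x ≠ 1 → HasDerivAt Hent (log (1 - x) - log x) x := by
    rw [Hent_eq_binEntropy]
    exact fun x ↦ hasDerivAt_binEntropy
  have hQ := hasDerivAt_curveQ hs
  have hnum := (((hasDerivAt_const p 2).sub hQ).mul (hH p hp0.ne' hp.2.ne)).add
    ((hasDerivAt_id' p).mul ((hH _ hq0.ne' hq1.ne).comp p hQ))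
  have hden := (((hasDerivAt_id' p).const_mul 2).mul_const lam1).add
    ((((hasDerivAt_const p 2).sub (hasDerivAt_id' p)).sub hQ).mul_const lam0)
  refine (hnum.div hden hM).congr_deriv ?_
  simp only [Pi.add_apply, Pi.sub_apply, Pi.mul_apply, Function.comp_apply, psi, Hent, curveQ]
    at hM ⊢
  field_simp
  ring

lemma hasDerivAt_psi (hα : α ∈ Ioo 0 1) (hp : p ∈ Ioo (α / (2 - α)) 1) :
    HasDerivAt (psi lam0 lam1 α)
      ((α * (lam1 - lam0) + 2 * lam0) / p + (α * (lam1 - lam0) + lam0 + 2 * lam1) / (1 - p)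
        + α * (4 - α) / (2 * p + α) ^ 2 *
          ((α * lam1 + lam0 * (curveQ α p - α)) / (curveQ α p * (1 - curveQ α p)))) p := by
  have hp0 : 0 < p := (div_two_sub_pos hα).trans hp.1
  have hs : 2 * p + α ≠ 0 := by linarith [hα.1]
  have hp1 : 1 - p ≠ 0 := by linarith [hp.2]
  have hq0 := (curveQ_pos hα.1 hp0.le).ne'
  have hq1 : 1 - curveQ α p ≠ 0 := by linarith [(curveQ_lt_one_iff hα hp0.le).2 hp.1]
  have hQ := hasDerivAt_curveQ hs
  have h := ((((hasDerivAt_log hp0.ne').const_mul (α * (lam1 - lam0) + 2 * lam0)).sub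
    ((((hasDerivAt_id' p).const_sub 1).log hp1).const_mul (α * (lam1 - lam0) + lam0 + 2 * lam1))).sub
    ((hQ.log hq0).const_mul (α * (lam1 - lam0)))).add
    (((hQ.const_sub 1).log hq1).const_mul (α * (lam1 - lam0) + lam0))
  refine h.congr_deriv ?_
  field_simp
  ring

lemma psi_strictMonoOn (h0 : 0 < lam0) (h1 : 0 < lam1) (hα : α ∈ Ioo 0 1) :
    StrictMonoOn (psi lam0 lam1 α) (Ioo (α / (2 - α)) 1) := by
  refine strictMonoOn_of_deriv_pos (convex_Ioo _ _)
    (fun x hx ↦ (hasDerivAt_psi hα hx).continuousAt.continuousWithinAt) fun x hx ↦ ?_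
  rw [interior_Ioo] at hx
  rw [(hasDerivAt_psi hα hx).deriv]
  have hx0 : 0 < x := (div_two_sub_pos hα).trans hx.1
  have hq0 := curveQ_pos hα.1 hx0.le
  have hq1 := (curveQ_lt_one_iff hα hx0.le).2 hx.1
  have hαq := lt_curveQ hα hx0.le hx.2.le
  obtain ⟨hα0, hα1⟩ := hα
  have hc1 : 0 < α * (lam1 - lam0) + 2 * lam0 := by nlinarith
  have hc2 : 0 < α * (lam1 - lam0) + lam0 + 2 * lam1 := by nlinarith
  have hc3 : 0 < α * lam1 + lam0 * (curveQ α x - α) := by nlinarith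
  have : 0 < 1 - x := by linarith [hx.2]
  have : 0 < 1 - curveQ α x := by linarith
  have : 0 < 4 - α := by linarith
  positivity

lemma tendsto_psi_nhdsGT (h0 : 0 < lam0) (h1 : 0 < lam1) (hα : α ∈ Ioo 0 1) :
    Tendsto (psi lam0 lam1 α) (𝓝[>] (α / (2 - α))) atBot := by
  set a := α / (2 - α)
  have ha0 : 0 < a := div_two_sub_pos hα
  have ha1 : a < 1 := div_two_sub_lt_one hα
  have hQ : ContinuousAt (curveQ α) a := (hasDerivAt_curveQ (by linarith [hα.1])).continuousAt
  have hQa := curveQ_div_two_sub_eq_one hα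
  have hregular : ContinuousAt (fun x ↦ (α * (lam1 - lam0) + 2 * lam0) * log x
      - (α * (lam1 - lam0) + lam0 + 2 * lam1) * log (1 - x)
      - α * (lam1 - lam0) * log (curveQ α x)) a := by
    have ha0' := ha0.ne'
    have ha1' : 1 - a ≠ 0 := by linarith
    have hQa' : curveQ α a ≠ 0 := by rw [hQa]; exact one_ne_zero
    fun_prop (disch := assumption)
  have hsing : Tendsto (fun x ↦ 1 - curveQ α x) (𝓝[>] a) (𝓝[>] 0) := by
    refine tendsto_nhdsWithin_iff.2 ⟨?_, ?_⟩
    · have : Tendsto (fun x ↦ 1 - curveQ α x) (𝓝 a) (𝓝 (1 - curveQ α a)) :=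
        (continuousAt_const.sub hQ).tendsto
      rw [hQa, sub_self] at this
      exact this.mono_left nhdsWithin_le_nhds
    · filter_upwards [Ioo_mem_nhdsGT ha1] with x hx
      exact sub_pos.2 ((curveQ_lt_one_iff hα (ha0.trans hx.1).le).2 hx.1)
  have hc4 : 0 < α * (lam1 - lam0) + lam0 := by nlinarith [hα.1, hα.2]
  exact (hregular.tendsto.mono_left nhdsWithin_le_nhds).add_atBot
    ((tendsto_log_nhdsGT_zero.comp hsing).const_mul_atBot hc4)

lemma tendsto_psi_nhdsLT_one (h0 : 0 < lam0) (h1 : 0 < lam1) (hα : α ∈ Ioo 0 1) :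
    Tendsto (psi lam0 lam1 α) (𝓝[<] 1) atTop := by
  have hQ : ContinuousAt (curveQ α) 1 := (hasDerivAt_curveQ (by linarith [hα.1])).continuousAt
  have hQ0 := curveQ_pos hα.1 zero_le_one
  have hQ1 := (curveQ_lt_one_iff hα zero_le_one).2 (div_two_sub_lt_one hα)
  have hregular : ContinuousAt (fun x ↦ (α * (lam1 - lam0) + 2 * lam0) * log x
      - α * (lam1 - lam0) * log (curveQ α x)
      + (α * (lam1 - lam0) + lam0) * log (1 - curveQ α x)) 1 := by
    have hQ0' := hQ0.ne'
    have hQ1' : 1 - curveQ α 1 ≠ 0 := by linarith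
    fun_prop (disch := first | assumption | exact one_ne_zero)
  have hsing : Tendsto (fun x : ℝ ↦ 1 - x) (𝓝[<] 1) (𝓝[>] 0) := by
    refine tendsto_nhdsWithin_iff.2 ⟨?_, ?_⟩
    · have : Tendsto (fun x : ℝ ↦ 1 - x) (𝓝 1) (𝓝 (1 - 1)) :=
        (continuous_const.sub continuous_id).tendsto 1
      rw [sub_self] at this
      exact this.mono_left nhdsWithin_le_nhds
    · filter_upwards [self_mem_nhdsWithin] with x hx
      exact sub_pos.2 (mem_Iio.1 hx)
  have hc2 : 0 < α * (lam1 - lam0) + lam0 + 2 * lam1 := by nlinarith [hα.1, hα.2]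
  refine ((hregular.tendsto.mono_left nhdsWithin_le_nhds).add_atTop
    (tendsto_neg_atBot_atTop.comp
      ((tendsto_log_nhdsGT_zero.comp hsing).const_mul_atBot hc2))).congr fun x ↦ ?_
  simp only [psi, Function.comp_apply]
  ring

lemma exists_psi_eq_zero (h0 : 0 < lam0) (h1 : 0 < lam1) (hα : α ∈ Ioo 0 1) :
    ∃ p ∈ Ioo (α / (2 - α)) 1, psi lam0 lam1 α p = 0 := by
  have ha1 : α / (2 - α) < 1 := div_two_sub_lt_one hα
  have hsurj := ContinuousOn.surjOn_of_tendsto (nonempty_Ioo.2 ha1)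
    (fun x hx ↦ (hasDerivAt_psi (lam0 := lam0) (lam1 := lam1) hα hx).continuousAt.continuousWithinAt)
    (by rw [tendsto_comp_coe_Ioo_atBot ha1]; exact tendsto_psi_nhdsGT h0 h1 hα)
    (by rw [tendsto_comp_coe_Ioo_atTop ha1]; exact tendsto_psi_nhdsLT_one h0 h1 hα)
  exact hsurj (mem_univ 0)

lemma continuousOn_Dfun_curveQ (h0 : 0 < lam0) (h1 : 0 < lam1) (hα : α ∈ Ioo 0 1) :
    ContinuousOn (fun x ↦ Dfun lam0 lam1 x (curveQ α x)) (Icc (α / (2 - α)) 1) := by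
  have ha0 : 0 < α / (2 - α) := div_two_sub_pos hα
  have hQ : ContinuousOn (curveQ α) (Icc (α / (2 - α)) 1) := fun x hx ↦
    (hasDerivAt_curveQ (by linarith [hα.1, ha0.trans_le hx.1])).continuousAt.continuousWithinAt
  have hH : Continuous Hent := Hent_eq_binEntropy ▸ binEntropy_continuous
  refine ContinuousOn.div (by fun_prop) (by fun_prop) fun x hx ↦ (Dfun_denom_pos h0 h1
    (ha0.trans_le hx.1) hx.2 ((curveQ_le_one_iff hα (ha0.trans_le hx.1).le).2 hx.1)).ne'

lemma Dfun_curveQ_lt_of_psi_eq_zero (h0 : 0 < lam0) (h1 : 0 < lam1) (hα : α ∈ Ioo 0 1)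
    (hp : p ∈ Ioo (α / (2 - α)) 1) (hψ : psi lam0 lam1 α p = 0) {x : ℝ}
    (hx : x ∈ Icc (α / (2 - α)) 1) (hxp : x ≠ p) :
    Dfun lam0 lam1 x (curveQ α x) < Dfun lam0 lam1 p (curveQ α p) := by
  have ha0 : 0 < α / (2 - α) := div_two_sub_pos hα
  have hcoef : ∀ y ∈ Ioo (α / (2 - α)) 1, -(2 * y ^ 2 * (4 - α)) /
      ((2 * y + α) ^ 2 * (2 * y * lam1 + (2 - y - curveQ α y) * lam0) ^ 2) < 0 := by
    intro y hy
    have hy0 := ha0.trans hy.1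
    have := Dfun_denom_pos h0 h1 hy0 hy.2.le ((curveQ_lt_one_iff hα hy0.le).2 hy.1).le
    have : 0 < 4 - α := by linarith [hα.2]
    have : 0 < 2 * y + α := by linarith [hα.1]
    exact div_neg_of_neg_of_pos (by simp only [neg_neg_iff_pos]; positivity) (by positivity)
  have hcont := continuousOn_Dfun_curveQ h0 h1 hα
  have hψmono := psi_strictMonoOn h0 h1 hα
  rcases hxp.lt_or_gt with hxp | hpx
  · refine strictMonoOn_of_deriv_pos (convex_Icc _ p) (hcont.mono (Icc_subset_Icc_right hp.2.le))
      (fun y hy ↦ ?_) ⟨hx.1, hxp.le⟩ ⟨hp.1.le, le_rfl⟩ hxp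
    rw [interior_Icc] at hy
    have hy' : y ∈ Ioo (α / (2 - α)) 1 := ⟨hy.1, hy.2.trans hp.2⟩
    rw [(hasDerivAt_Dfun_curveQ h0 h1 hα hy').deriv]
    exact mul_pos_of_neg_of_neg (hcoef y hy') (hψ ▸ hψmono hy' hp hy.2)
  · refine strictAntiOn_of_deriv_neg (convex_Icc p 1) (hcont.mono (Icc_subset_Icc_left hp.1.le))
      (fun y hy ↦ ?_) ⟨le_rfl, hp.2.le⟩ ⟨hpx.le, hx.2⟩ hpx
    rw [interior_Icc] at hy
    have hy' : y ∈ Ioo (α / (2 - α)) 1 := ⟨hp.1.trans hy.1, hy.2⟩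
    rw [(hasDerivAt_Dfun_curveQ h0 h1 hα hy').deriv]
    exact mul_neg_of_neg_of_pos (hcoef y hy') (hψ ▸ hψmono hp hy' hy.1)

lemma mem_gammaCurve_of_lt_one (hα : α ∈ Ioo 0 1) {q : ℝ} (hpq : (p, q) ∈ gammaCurve α)
    (hp : p < 1) (hq : q < 1) : p ∈ Ioo (α / (2 - α)) 1 ∧ q = curveQ α p := by
  obtain ⟨hpa, rfl⟩ := (mem_gammaCurve_iff hα).1 hpq
  have hp0 := (div_two_sub_pos hα).trans_le hpa.1
  exact ⟨⟨(curveQ_lt_one_iff hα hp0.le).1 hq, hp⟩, rfl⟩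

lemma stationary_curveQ_eq_psi (hα : α ∈ Ioo 0 1) (hp : p ∈ Ioo (α / (2 - α)) 1) :
    α * (lam1 - lam0) * log (p * (1 - curveQ α p) / ((1 - p) * curveQ α p)) +
      lam0 * log (p ^ 2 * (1 - curveQ α p) / (1 - p)) - 2 * lam1 * log (1 - p) =
      psi lam0 lam1 α p := by
  have hp0 := (div_two_sub_pos hα).trans hp.1
  have hp1 : 1 - p ≠ 0 := by linarith [hp.2]
  have hq0 := (curveQ_pos hα.1 hp0.le).ne'
  have hq1 : 1 - curveQ α p ≠ 0 := by linarith [(curveQ_lt_one_iff hα hp0.le).2 hp.1]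
  rw [log_div (by positivity) (by positivity), log_mul hp0.ne' hq1, log_mul hp1 hq0,
    log_div (by positivity) hp1, log_mul (by positivity) hq1, log_pow, psi]
  push_cast
  ring

end

/-- For `λ₀, λ₁ > 0` and `α ∈ (0,1)`, `D(p,q)` attains its maximum over `γ_α` at the unique
pair `(p,q) ∈ γ_α ∩ (0,1)²` satisfying the equation
`α(λ₁-λ₀) log(p(1-q)/((1-p)q)) + λ₀ log(p²(1-q)/(1-p)) - 2λ₁ log(1-p) = 0`,
and at no other point of `γ_α`. -/
theorem stmt11 (lam0 lam1 : ℝ) (h0 : 0 < lam0) (h1 : 0 < lam1)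
    (α : ℝ) (hα : α ∈ Set.Ioo (0 : ℝ) 1) :
    (∃! pq : ℝ × ℝ, pq ∈ gammaCurve α ∧ pq.1 ∈ Set.Ioo (0 : ℝ) 1 ∧
        pq.2 ∈ Set.Ioo (0 : ℝ) 1 ∧
        α * (lam1 - lam0) * Real.log (pq.1 * (1 - pq.2) / ((1 - pq.1) * pq.2)) +
          lam0 * Real.log (pq.1 ^ 2 * (1 - pq.2) / (1 - pq.1)) -
          2 * lam1 * Real.log (1 - pq.1) = 0) ∧
    ∀ p q : ℝ, (p, q) ∈ gammaCurve α → p ∈ Set.Ioo (0 : ℝ) 1 → q ∈ Set.Ioo (0 : ℝ) 1 →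
      α * (lam1 - lam0) * Real.log (p * (1 - q) / ((1 - p) * q)) +
        lam0 * Real.log (p ^ 2 * (1 - q) / (1 - p)) -
        2 * lam1 * Real.log (1 - p) = 0 →
      (∀ xy ∈ gammaCurve α, Dfun lam0 lam1 xy.1 xy.2 ≤ Dfun lam0 lam1 p q) ∧
      (∀ xy ∈ gammaCurve α, xy ≠ (p, q) →
        Dfun lam0 lam1 xy.1 xy.2 < Dfun lam0 lam1 p q) := by
  obtain ⟨p₀, hp₀, hψ₀⟩ := exists_psi_eq_zero h0 h1 hα
  have hp₀0 : 0 < p₀ := (div_two_sub_pos hα).trans hp₀.1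
  refine ⟨⟨(p₀, curveQ α p₀), ⟨(mem_gammaCurve_iff hα).2 ⟨mem_Icc_of_Ioo hp₀, rfl⟩,
      ⟨hp₀0, hp₀.2⟩, ⟨curveQ_pos hα.1 hp₀0.le, (curveQ_lt_one_iff hα hp₀0.le).2 hp₀.1⟩,
      (stationary_curveQ_eq_psi hα hp₀).trans hψ₀⟩, ?_⟩, ?_⟩
  · rintro ⟨p, q⟩ ⟨hpq, hp, hq, hstat⟩
    obtain ⟨hpa, rfl⟩ := mem_gammaCurve_of_lt_one hα hpq hp.2 hq.2
    have hψ : psi lam0 lam1 α p = 0 := (stationary_curveQ_eq_psi hα hpa).symm.trans hstat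
    rw [(psi_strictMonoOn h0 h1 hα).injOn hpa hp₀ (hψ.trans hψ₀.symm)]
  · intro p q hpq hp hq hstat
    obtain ⟨hpa, rfl⟩ := mem_gammaCurve_of_lt_one hα hpq hp.2 hq.2
    have hψ : psi lam0 lam1 α p = 0 := (stationary_curveQ_eq_psi hα hpa).symm.trans hstat
    have hlt : ∀ xy ∈ gammaCurve α, xy ≠ (p, curveQ α p) →
        Dfun lam0 lam1 xy.1 xy.2 < Dfun lam0 lam1 p (curveQ α p) := by
      rintro ⟨x, y⟩ hxy hne
      obtain ⟨hx, rfl⟩ := (mem_gammaCurve_iff hα).1 hxy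
      exact Dfun_curveQ_lt_of_psi_eq_zero h0 h1 hα hpa hψ hx fun h ↦ hne (h ▸ rfl)
    refine ⟨fun xy hxy ↦ ?_, hlt⟩
    rcases eq_or_ne xy (p, curveQ α p) with rfl | hne
    · exact le_rfl
    · exact (hlt xy hxy hne).le
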